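/- Let G₁, ..., Gₙ be independent standard Gumbel random variables and s₁, ..., sₙ real scores. Then for each i, P(sᵢ + Gᵢ = maxⱼ (sⱼ + Gⱼ)) = exp(sᵢ) / ∑ⱼ exp(sⱼ) (the Gumbel-max trick recovers the softmax distribution). -/

import Mathlib

/-! Write `F x = exp (-exp (-x))` for the Gumbel CDF. Conditioning on `G i = x`, independence
gives `P(s i + G i is maximal) = E[∏_{j ≠ i} F (G i + s i - s j)]`. Since
`F (x + a) = F x ^ exp (-a)`, the product is `F (G i) ^ c` with `c = ∑_{j ≠ i} exp (s j - s i)`;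
and `F (G i)` is uniform on `[0, 1]`, so the expectation is `∫₀¹ u ^ c du = 1 / (c + 1)`,
which is the softmax weight of `i`. -/

open MeasureTheory ProbabilityTheory Real Set

noncomputable def gumbelCDF (x : ℝ) : ℝ := exp (-exp (-x))

theorem gumbelCDF_pos (x : ℝ) : 0 < gumbelCDF x := exp_pos _

theorem gumbelCDF_le_one (x : ℝ) : gumbelCDF x ≤ 1 :=
  exp_le_one_iff.mpr (neg_nonpos.mpr (exp_pos _).le)

theorem continuous_gumbelCDF : Continuous gumbelCDF := by
  unfold gumbelCDF; fun_prop

theorem gumbelCDF_add (x a : ℝ) : gumbelCDF (x + a) = gumbelCDF x ^ exp (-a) := by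
  rw [gumbelCDF, gumbelCDF, ← exp_mul, neg_add, exp_add]
  ring_nf

theorem prod_gumbelCDF_add {ι : Type*} (T : Finset ι) (x : ℝ) (a : ι → ℝ) :
    ∏ j ∈ T, gumbelCDF (x + a j) = gumbelCDF x ^ ∑ j ∈ T, exp (-a j) := by
  rw [rpow_sum_of_pos (gumbelCDF_pos x)]
  exact Finset.prod_congr rfl fun j _ => gumbelCDF_add x (a j)

theorem gumbelCDF_le_iff {u : ℝ} (hu₀ : 0 < u) (hu₁ : u < 1) (x : ℝ) :
    gumbelCDF x ≤ u ↔ x ≤ -log (-log u) := by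
  have hlog : 0 < -log u := neg_pos.mpr (log_neg hu₀ hu₁)
  rw [gumbelCDF, ← le_log_iff_exp_le hu₀, neg_le, le_neg, log_le_iff_le_exp hlog]

theorem gumbelCDF_neg_log_neg_log {u : ℝ} (hu₀ : 0 < u) (hu₁ : u < 1) :
    gumbelCDF (-log (-log u)) = u := by
  have hlog : 0 < -log u := neg_pos.mpr (log_neg hu₀ hu₁)
  rw [gumbelCDF, neg_neg, exp_log hlog, neg_neg, exp_log hu₀]

theorem setLIntegral_Ioc_zero_one_rpow {c : ℝ} (hc : -1 < c) :
    ∫⁻ u in Ioc (0 : ℝ) 1, ENNReal.ofReal (u ^ c) = ENNReal.ofReal (1 / (c + 1)) := by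
  have hint : IntervalIntegrable (fun u : ℝ => u ^ c) volume 0 1 :=
    intervalIntegral.intervalIntegrable_rpow' hc
  rw [← ofReal_integral_eq_lintegral_ofReal
    ((intervalIntegrable_iff_integrableOn_Ioc_of_le zero_le_one).mp hint)
    ((ae_restrict_iff' measurableSet_Ioc).mpr (ae_of_all _ fun u hu => rpow_nonneg hu.1.le c)),
    ← intervalIntegral.integral_of_le zero_le_one, integral_rpow (Or.inl hc),
    one_rpow, zero_rpow (by linarith), sub_zero]

theorem map_gumbelCDF_eq_restrict_Ioc {ν : Measure ℝ} [IsProbabilityMeasure ν]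
    (hν : ∀ x, ν (Iic x) = ENNReal.ofReal (gumbelCDF x)) :
    ν.map gumbelCDF = volume.restrict (Ioc 0 1) := by
  refine Measure.ext_of_Iic _ _ fun u => ?_
  rw [Measure.map_apply continuous_gumbelCDF.measurable measurableSet_Iic,
    Measure.restrict_apply measurableSet_Iic]
  rcases le_or_gt u 0 with hu₀ | hu₀
  · have hF : gumbelCDF ⁻¹' Iic u = ∅ :=
      eq_empty_of_forall_notMem fun x hx => (hu₀.trans_lt (gumbelCDF_pos x)).not_ge hx
    have hI : Iic u ∩ Ioc 0 1 = ∅ :=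
      eq_empty_of_forall_notMem fun v hv => (hu₀.trans_lt hv.2.1).not_ge hv.1
    simp [hF, hI]
  rcases lt_or_ge u 1 with hu₁ | hu₁
  · have hF : gumbelCDF ⁻¹' Iic u = Iic (-log (-log u)) := by
      ext x; exact gumbelCDF_le_iff hu₀ hu₁ x
    have hI : Iic u ∩ Ioc 0 1 = Ioc 0 u := by
      ext v; simp only [mem_inter_iff, mem_Iic, mem_Ioc]; constructor
      · rintro ⟨hv, hv₀, -⟩; exact ⟨hv₀, hv⟩
      · rintro ⟨hv₀, hv⟩; exact ⟨hv, hv₀, hv.trans hu₁.le⟩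
    rw [hF, hI, hν, gumbelCDF_neg_log_neg_log hu₀ hu₁, Real.volume_Ioc, sub_zero]
  · have hI : Iic u ∩ Ioc 0 1 = Ioc 0 1 := inter_eq_right.mpr fun v hv => hv.2.trans hu₁
    have hF : gumbelCDF ⁻¹' Iic u = univ :=
      eq_univ_of_forall fun x => (gumbelCDF_le_one x).trans hu₁
    simp [hF, hI]

theorem lintegral_gumbelCDF_rpow {ν : Measure ℝ} [IsProbabilityMeasure ν]
    (hν : ∀ x, ν (Iic x) = ENNReal.ofReal (gumbelCDF x)) {c : ℝ} (hc : -1 < c) :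
    ∫⁻ x, ENNReal.ofReal (gumbelCDF x ^ c) ∂ν = ENNReal.ofReal (1 / (c + 1)) := by
  rw [← lintegral_map (f := fun u => ENNReal.ofReal (u ^ c)) (by fun_prop)
    continuous_gumbelCDF.measurable, map_gumbelCDF_eq_restrict_Ioc hν,
    setLIntegral_Ioc_zero_one_rpow hc]

namespace ProbabilityTheory

theorem IndepFun.measure_prodMk_mem_eq_lintegral {Ω α β : Type*} [MeasurableSpace Ω]
    [MeasurableSpace α] [MeasurableSpace β] {μ : Measure Ω} [IsFiniteMeasure μ]
    {X : Ω → α} {Y : Ω → β} (hXY : IndepFun X Y μ) (hX : Measurable X) (hY : Measurable Y)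
    {S : Set (α × β)} (hS : MeasurableSet S) :
    μ {ω | (X ω, Y ω) ∈ S} = ∫⁻ x, μ {ω | (x, Y ω) ∈ S} ∂(μ.map X) := by
  change μ ((fun ω => (X ω, Y ω)) ⁻¹' S) = _
  rw [← Measure.map_apply (hX.prodMk hY) hS,
    hXY.map_prod_eq_prod_map_map hX.aemeasurable hY.aemeasurable, Measure.prod_apply hS]
  exact lintegral_congr fun x => Measure.map_apply hY (measurable_prodMk_left hS)

theorem iIndepFun.measure_forall_le_add_eq_lintegral {Ω ι : Type*} [MeasurableSpace Ω]
    {μ : Measure Ω} [IsFiniteMeasure μ] {G : ι → Ω → ℝ} (hmeas : ∀ i, Measurable (G i))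
    (hindep : iIndepFun G μ) {i : ι} {T : Finset ι} (hi : i ∉ T) (a : ι → ℝ) :
    μ {ω | ∀ j ∈ T, G j ω ≤ G i ω + a j}
      = ∫⁻ x, ∏ j ∈ T, μ {ω | G j ω ≤ x + a j} ∂(μ.map (G i)) := by
  set Y : Ω → T → ℝ := fun ω j => G j ω
  have hY : Measurable Y := measurable_pi_lambda _ fun j => hmeas j
  have hXY : IndepFun (G i) Y μ := by
    have h := (hindep.indepFun_finset {i} T (Finset.disjoint_singleton_left.mpr hi) hmeas).comp
      (measurable_pi_apply ⟨i, Finset.mem_singleton_self i⟩) measurable_id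
    exact h
  set S : Set (ℝ × (T → ℝ)) := {p | ∀ j : T, p.2 j ≤ p.1 + a j}
  have hS : MeasurableSet S := by
    simp only [S, ofPred_forall]
    exact .iInter fun j => measurableSet_le (by fun_prop) (by fun_prop)
  have hevent : {ω | ∀ j ∈ T, G j ω ≤ G i ω + a j} = {ω | (G i ω, Y ω) ∈ S} := by
    ext ω; simp [S, Y]
  have hslice (x : ℝ) : {ω | (x, Y ω) ∈ S} = ⋂ j ∈ T, {ω | G j ω ≤ x + a j} := by
    ext ω; simp [S, Y]
  rw [hevent, hXY.measure_prodMk_mem_eq_lintegral (hmeas i) hY hS]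
  refine lintegral_congr fun x => ?_
  rw [hslice]
  exact hindep.meas_biInter fun j _ => ⟨Iic (x + a j), measurableSet_Iic, rfl⟩

end ProbabilityTheory

theorem one_div_sum_erase_exp_sub_add_one {ι : Type*} [Fintype ι] [DecidableEq ι]
    (s : ι → ℝ) (i : ι) :
    1 / (∑ j ∈ Finset.univ.erase i, exp (s j - s i) + 1) = exp (s i) / ∑ j, exp (s j) := by
  have hsum :
      ∑ j ∈ Finset.univ.erase i, exp (s j - s i) + 1 = ∑ j, exp (s j) / exp (s i) := by
    rw [← Finset.sum_erase_add _ _ (Finset.mem_univ i), div_self (exp_pos _).ne']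
    congr 1
    exact Finset.sum_congr rfl fun j _ => exp_sub _ _
  rw [hsum, ← Finset.sum_div, one_div_div]

theorem gumbel_max_softmax_general
    {Ω : Type*} [MeasurableSpace Ω] (μ : Measure Ω) [IsProbabilityMeasure μ]
    (n : ℕ) (G : Fin n → Ω → ℝ) (s : Fin n → ℝ)
    (hmeas : ∀ i, Measurable (G i))
    (hindep : iIndepFun G μ)
    (hgum : ∀ i (x : ℝ), μ {ω | G i ω ≤ x} = ENNReal.ofReal (Real.exp (-Real.exp (-x)))) :
    ∀ i : Fin n,
      μ {ω | ∀ j : Fin n, s j + G j ω ≤ s i + G i ω}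
        = ENNReal.ofReal (Real.exp (s i) / ∑ j : Fin n, Real.exp (s j)) := by
  intro i
  set T := Finset.univ.erase i
  set c := ∑ j ∈ T, exp (s j - s i)
  have hevent : {ω | ∀ j, s j + G j ω ≤ s i + G i ω}
      = {ω | ∀ j ∈ T, G j ω ≤ G i ω + (s i - s j)} := by
    ext ω
    simp only [T, Finset.mem_erase, Finset.mem_univ, and_true]
    refine ⟨fun h j _ => by linarith [h j], fun h j => ?_⟩
    rcases eq_or_ne j i with rfl | hj
    · exact le_rfl
    · linarith [h j hj]
  have := Measure.isProbabilityMeasure_map (μ := μ) (hmeas i).aemeasurable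
  have hlaw (x : ℝ) : μ.map (G i) (Iic x) = ENNReal.ofReal (gumbelCDF x) := by
    rw [Measure.map_apply (hmeas i) measurableSet_Iic]
    exact hgum i x
  have hslice (x : ℝ) :
      ∏ j ∈ T, μ {ω | G j ω ≤ x + (s i - s j)} = ENNReal.ofReal (gumbelCDF x ^ c) := by
    simp_rw [hgum]
    rw [← ENNReal.ofReal_prod_of_nonneg fun j _ => (exp_pos _).le]
    have hprod := prod_gumbelCDF_add T x (fun j => s i - s j)
    simp only [neg_sub] at hprod
    exact congrArg ENNReal.ofReal hprod
  have hc : -1 < c := neg_one_lt_zero.trans_le (Finset.sum_nonneg fun j _ => (exp_pos _).le)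
  rw [hevent, hindep.measure_forall_le_add_eq_lintegral hmeas (Finset.notMem_erase i _),
    lintegral_congr hslice, lintegral_gumbelCDF_rpow hlaw hc,
    one_div_sum_erase_exp_sub_add_one]

/-- Gumbel-max trick: with i.i.d. standard Gumbels `G i` and scores `s i`, the probability
that `s i + G i` attains the maximum is the softmax `exp (s i) / ∑ j, exp (s j)`. -/
theorem gumbel_max_softmax
    {Ω : Type*} [MeasurableSpace Ω] (μ : Measure Ω) [IsProbabilityMeasure μ]
    (n : ℕ) (hn : 1 ≤ n) (G : Fin n → Ω → ℝ) (s : Fin n → ℝ)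
    (hmeas : ∀ i, Measurable (G i))
    (hindep : iIndepFun G μ)
    (hgum : ∀ i (x : ℝ), μ {ω | G i ω ≤ x} = ENNReal.ofReal (Real.exp (-Real.exp (-x)))) :
    ∀ i : Fin n,
      μ {ω | ∀ j : Fin n, s j + G j ω ≤ s i + G i ω}
        = ENNReal.ofReal (Real.exp (s i) / ∑ j : Fin n, Real.exp (s j)) :=
  gumbel_max_softmax_general μ n G s hmeas hindep hgum
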